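/- If the bipartite graph B has a Hamiltonian cycle, then the graph G constructed from B by the reduction has a Hamiltonian cycle, obtained by replacing each occurrence of consecutive vertices m_i, n_j, m_k on the cycle in B by the sequence X_i, A_{ij}, Y_j, A_{hj}, Z_j, A_{kj}, X_k when d(n_j)=3 (with m_h the third neighbor of n_j), and by X_i, A_{ij}, Y_j, A_{kj}, X_k when d(n_j)=2. -/

import Mathlib

/-!
Read the Hamiltonian cycle of `B`, started at some `m`, as
`m_{σ 0}, n_{τ 0}, m_{σ 1}, …, n_{τ (r-1)}, m_{σ r} = m_{σ 0}`, where `σ` and `τ` map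
`{0, …, r-1}` bijectively onto `Fin r` (by parity, position `2t` of the cycle lies in `M`).
Each stretch `m_i, n_j, m_k` becomes the path `X_i, A_{ij}, Y_j, (A_{hj}, Z_j,) A_{kj}` through
the gadget of `n_j`; its last vertex is adjacent to `X_k`, where the next path starts. These
paths are disjoint because `σ` and `τ` are injective (and `i ≠ k` as `r ≥ 2`), and they cover
`G` because `σ` and `τ` are surjective and, as `d(n_j) ∈ {2, 3}`, the neighbours of `n_j` are
exactly `m_i`, `m_k` (and `m_h`).
-/

/-- The vertex type of the graph `G` constructed from the bipartite graph
`B = (M, N, E)` (with `E i j` meaning `m_i n_j ∈ E`): the vertices `X_i`, `Y_j`,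
`Z_j` (only for `j` with `d(n_j) = 3`) and `A_{ij}` (only for edges `m_i n_j`). -/
def Vtx (r : ℕ) (E : Fin r → Fin r → Prop) : Type :=
  {v : Fin r ⊕ Fin r ⊕ Fin r ⊕ Fin r × Fin r //
    match v with
    | Sum.inl _ => True
    | Sum.inr (Sum.inl _) => True
    | Sum.inr (Sum.inr (Sum.inl j)) => {i : Fin r | E i j}.ncard = 3
    | Sum.inr (Sum.inr (Sum.inr (i, j))) => E i j}

/-- The vertex `X_i`. -/
def Xv {r : ℕ} {E : Fin r → Fin r → Prop} (i : Fin r) : Vtx r E :=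
  ⟨Sum.inl i, trivial⟩

/-- The vertex `Y_j`. -/
def Yv {r : ℕ} {E : Fin r → Fin r → Prop} (j : Fin r) : Vtx r E :=
  ⟨Sum.inr (Sum.inl j), trivial⟩

/-- The vertex `Z_j`, present when `d(n_j) = 3`. -/
def Zv {r : ℕ} {E : Fin r → Fin r → Prop} (j : Fin r)
    (hj : {i : Fin r | E i j}.ncard = 3) : Vtx r E :=
  ⟨Sum.inr (Sum.inr (Sum.inl j)), hj⟩

/-- The vertex `A_{ij}`, present when `m_i n_j ∈ E`. -/
def Av {r : ℕ} {E : Fin r → Fin r → Prop} (i j : Fin r) (h : E i j) : Vtx r E :=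
  ⟨Sum.inr (Sum.inr (Sum.inr (i, j))), h⟩

/-- Membership in the clique `K_s = {X_s} ∪ {A_{ij} : m_i n_j ∈ E, i ≤ s}`. -/
def inK {r : ℕ} {E : Fin r → Fin r → Prop} (s : Fin r) (v : Vtx r E) : Prop :=
  match v.val with
  | Sum.inl s' => s' = s
  | Sum.inr (Sum.inr (Sum.inr (i, _))) => i ≤ s
  | _ => False

/-- Membership in the clique `K'_j = {Y_j} ∪ {A_{ij} : m_i n_j ∈ E}`. -/
def inK' {r : ℕ} {E : Fin r → Fin r → Prop} (j : Fin r) (v : Vtx r E) : Prop :=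
  match v.val with
  | Sum.inr (Sum.inl j') => j' = j
  | Sum.inr (Sum.inr (Sum.inr (_, j'))) => j' = j
  | _ => False

/-- Membership in the clique `K''_j = {Z_j} ∪ {A_{ij} : m_i n_j ∈ E}`
(a clique of `G` only when `d(n_j) = 3`). -/
def inK'' {r : ℕ} {E : Fin r → Fin r → Prop} (j : Fin r) (v : Vtx r E) : Prop :=
  match v.val with
  | Sum.inr (Sum.inr (Sum.inl j')) => j' = j
  | Sum.inr (Sum.inr (Sum.inr (_, j'))) => j' = j
  | _ => False

/-- The graph `G` of the reduction: two distinct vertices are adjacent iff they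
lie in a common clique `K_s`, `K'_j`, or `K''_j` (the latter for `d(n_j) = 3`). -/
def Gr (r : ℕ) (E : Fin r → Fin r → Prop) : SimpleGraph (Vtx r E) :=
  SimpleGraph.fromRel (fun u v =>
    (∃ s, inK s u ∧ inK s v) ∨ (∃ j, inK' j u ∧ inK' j v) ∨
      (∃ j, {i : Fin r | E i j}.ncard = 3 ∧ inK'' j u ∧ inK'' j v))

instance {r : ℕ} {E : Fin r → Fin r → Prop} : DecidableEq (Vtx r E) := by
  unfold Vtx; infer_instance

/-- The bipartite graph `B = (M, N, E)` with `M = {m_1, …, m_r}` (left) and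
`N = {n_1, …, n_r}` (right): `m_i` is adjacent to `n_j` iff `E i j`. -/
def Bip (r : ℕ) (E : Fin r → Fin r → Prop) : SimpleGraph (Fin r ⊕ Fin r) :=
  SimpleGraph.fromRel (fun u v =>
    match u, v with
    | Sum.inl i, Sum.inr j => E i j
    | _, _ => False)

open SimpleGraph

namespace SimpleGraph

variable {V : Type*} [DecidableEq V] {G : SimpleGraph V}

theorem exists_isHamiltonianCycle_of_isChain {l : List V} {a : V} (hhead : l.head? = some a)
    (hchain : (l ++ [a]).IsChain G.Adj) (hnodup : l.Nodup) (hmem : ∀ v, v ∈ l)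
    (hlen : 3 ≤ l.length) : ∃ p : G.Walk a a, p.IsHamiltonianCycle := by
  obtain ⟨t, rfl⟩ : ∃ t, l = a :: t := by
    cases l with
    | nil => simp at hhead
    | cons b t => exact ⟨t, by simp_all⟩
  have hne : a :: t ++ [a] ≠ [] := List.cons_ne_nil _ _
  obtain ⟨p, hsupport⟩ : ∃ p : G.Walk a a, p.support = a :: t ++ [a] :=
    ⟨(Walk.ofSupport _ hne hchain).copy rfl (List.getLast_append_singleton _),
      (Walk.support_copy _ _ _).trans (Walk.support_ofSupport hne hchain)⟩
  have htail : p.support.tail = t ++ [a] := by rw [hsupport]; rfl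
  have hlength : 3 ≤ p.length := by
    have := p.length_support
    simp only [hsupport, List.length_cons, List.length_append] at this hlen
    omega
  have hnil : ¬ p.Nil := Walk.not_nil_iff_lt_length.mpr (by omega)
  have hnodup' : (t ++ [a]).Nodup := (List.perm_append_singleton a t).nodup_iff.mpr hnodup
  refine ⟨p, Walk.isHamiltonianCycle_iff_isCycle_and_support_count_tail_eq_one.mpr
    ⟨?_, fun v => ?_⟩⟩
  · refine Walk.isCycle_iff_isPath_tail_and_le_length.mpr ⟨?_, hlength⟩
    rwa [Walk.isPath_def, Walk.support_tail_of_not_nil _ hnil, htail]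
  · rw [htail]
    exact List.count_eq_one_of_mem hnodup' (by simpa [or_comm] using hmem v)

end SimpleGraph

theorem List.isChain_flatMap_range_append {α : Type*} {R : α → α → Prop} {b : ℕ → List α}
    {x : ℕ → α} : ∀ {n : ℕ}, (∀ t < n, (b t).head? = some (x t)) →
      (∀ t < n, (b t ++ [x (t + 1)]).IsChain R) →
      ((List.range n).flatMap b ++ [x n]).IsChain R
  | 0, _, _ => by simp
  | n + 1, hhead, hb => by
    have ih : ((List.range n).flatMap b ++ [x n]).IsChain R :=
      isChain_flatMap_range_append (fun t ht => hhead t (by omega)) (fun t ht => hb t (by omega))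
    rw [List.range_succ, List.flatMap_append, List.flatMap_singleton, List.append_assoc]
    obtain ⟨hleft, -, hlast⟩ := List.isChain_append.mp ih
    refine hleft.append (hb n (by omega)) fun u hu y hy => ?_
    rw [List.head?_append, hhead n (by omega)] at hy
    cases hy
    exact hlast u hu _ rfl

lemma Sum.eq_inl_elim_of_isLeft {α : Type*} {x : α ⊕ α} (h : x.isLeft) :
    x = .inl (x.elim id id) := by
  cases x <;> simp_all

lemma Sum.eq_inr_elim_of_not_isLeft {α : Type*} {x : α ⊕ α} (h : ¬ x.isLeft) :
    x = .inr (x.elim id id) := by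
  cases x <;> simp_all

/-- The Hamiltonian cycle `m_{left 0}, n_{right 0}, m_{left 1}, …, n_{right (r-1)}, m_{left r}`
of `B`. -/
structure BipHamCycle (r : ℕ) (E : Fin r → Fin r → Prop) where
  left : ℕ → Fin r
  right : ℕ → Fin r
  adj_left : ∀ t < r, E (left t) (right t)
  adj_right : ∀ t < r, E (left (t + 1)) (right t)
  left_r : left r = left 0
  bijOn_left : Set.BijOn left (Set.Iio r) Set.univ
  bijOn_right : Set.BijOn right (Set.Iio r) Set.univ

section Reduction

variable {r : ℕ} {E : Fin r → Fin r → Prop}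

namespace Bip

@[simp] lemma adj_inl_inr {i j : Fin r} : (Bip r E).Adj (.inl i) (.inr j) ↔ E i j := by
  simp [Bip]

@[simp] lemma adj_inr_inl {i j : Fin r} : (Bip r E).Adj (.inr j) (.inl i) ↔ E i j := by
  simp [Bip]

lemma isLeft_iff_not_isLeft_of_adj {u v : Fin r ⊕ Fin r} (h : (Bip r E).Adj u v) :
    u.isLeft ↔ ¬ v.isLeft := by
  cases u <;> cases v <;> simp_all [Bip]

lemma getVert_isLeft_iff_even {i : Fin r} {v : Fin r ⊕ Fin r} (p : (Bip r E).Walk (.inl i) v)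
    {n : ℕ} (hn : n ≤ p.length) : (p.getVert n).isLeft ↔ Even n := by
  induction n with
  | zero => simp
  | succ n ih =>
    rw [Nat.even_add_one, ← ih (by omega),
      isLeft_iff_not_isLeft_of_adj (p.adj_getVert_succ (Nat.lt_of_succ_le hn)), not_not]

lemma getVert_two_mul {i : Fin r} {v : Fin r ⊕ Fin r} (p : (Bip r E).Walk (.inl i) v) {t : ℕ}
    (ht : 2 * t ≤ p.length) : p.getVert (2 * t) = .inl ((p.getVert (2 * t)).elim id id) :=
  Sum.eq_inl_elim_of_isLeft <| (getVert_isLeft_iff_even p ht).mpr (even_two_mul t)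

lemma getVert_two_mul_add_one {i : Fin r} {v : Fin r ⊕ Fin r} (p : (Bip r E).Walk (.inl i) v)
    {t : ℕ} (ht : 2 * t + 1 ≤ p.length) :
    p.getVert (2 * t + 1) = .inr ((p.getVert (2 * t + 1)).elim id id) :=
  Sum.eq_inr_elim_of_not_isLeft <|
    mt (getVert_isLeft_iff_even p ht).mp (Nat.not_even_two_mul_add_one t)

variable {i : Fin r} {p : (Bip r E).Walk (.inl i) (.inl i)}

lemma length_eq_two_mul (hp : p.IsHamiltonianCycle) : p.length = 2 * r := by
  rw [hp.length_eq, Fintype.card_sum, Fintype.card_fin, two_mul]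

lemma bijOn_getVert_two_mul (hp : p.IsHamiltonianCycle) :
    Set.BijOn (fun t => (p.getVert (2 * t)).elim id id) (Set.Iio r) Set.univ := by
  have hlen := length_eq_two_mul hp
  refine ⟨fun _ _ => trivial, fun t (ht : t < r) t' (ht' : t' < r) h => ?_, fun i' _ => ?_⟩
  · have := hp.isCycle.getVert_injOn' (x₁ := 2 * t) (x₂ := 2 * t')
      (by simp only [Set.mem_ofPred_eq, hlen]; omega)
      (by simp only [Set.mem_ofPred_eq, hlen]; omega)
      (by rw [getVert_two_mul p (by omega), getVert_two_mul p (t := t') (by omega)]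
          exact congrArg _ h)
    omega
  · obtain ⟨n, hn, hnle⟩ := Walk.mem_support_iff_exists_getVert.mp (hp.mem_support (.inl i'))
    obtain ⟨t, rfl⟩ : Even n := (getVert_isLeft_iff_even p hnle).mp (by rw [hn]; rfl)
    rw [← two_mul] at hn hnle
    obtain ht | rfl : t < r ∨ t = r := by omega
    · exact ⟨t, ht, by simp [hn]⟩
    · -- position `2r` is the end point `m_i` of the cycle, which is also at position `0`
      have hi : i' = i := by
        rw [← hlen, Walk.getVert_length] at hn
        exact (Sum.inl_injective hn).symm
      exact ⟨0, i.pos, by simp [hi]⟩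

lemma bijOn_getVert_two_mul_add_one (hp : p.IsHamiltonianCycle) :
    Set.BijOn (fun t => (p.getVert (2 * t + 1)).elim id id) (Set.Iio r) Set.univ := by
  have hlen := length_eq_two_mul hp
  refine ⟨fun _ _ => trivial, fun t (ht : t < r) t' (ht' : t' < r) h => ?_, fun j _ => ?_⟩
  · have := hp.isCycle.getVert_injOn' (x₁ := 2 * t + 1) (x₂ := 2 * t' + 1)
      (by simp only [Set.mem_ofPred_eq, hlen]; omega)
      (by simp only [Set.mem_ofPred_eq, hlen]; omega)
      (by rw [getVert_two_mul_add_one p (by omega),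
            getVert_two_mul_add_one p (t := t') (by omega)]
          exact congrArg _ h)
    omega
  · obtain ⟨n, hn, hnle⟩ := Walk.mem_support_iff_exists_getVert.mp (hp.mem_support (.inr j))
    obtain ⟨t, rfl⟩ : Odd n := Nat.not_even_iff_odd.mp
      (mt (getVert_isLeft_iff_even p hnle).mpr (by rw [hn]; simp))
    exact ⟨t, show t < r by omega, by simp [hn]⟩

end Bip

/-- `Sum.elim id id` forgets the side of a vertex of `B`; parity determines it. -/
def BipHamCycle.ofIsHamiltonianCycle {i : Fin r} {p : (Bip r E).Walk (.inl i) (.inl i)}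
    (hp : p.IsHamiltonianCycle) : BipHamCycle r E where
  left t := (p.getVert (2 * t)).elim id id
  right t := (p.getVert (2 * t + 1)).elim id id
  adj_left t ht := by
    have hlen := Bip.length_eq_two_mul hp
    have h := p.adj_getVert_succ (i := 2 * t) (by omega)
    rwa [Bip.getVert_two_mul p (by omega), Bip.getVert_two_mul_add_one p (by omega),
      Bip.adj_inl_inr] at h
  adj_right t ht := by
    have hlen := Bip.length_eq_two_mul hp
    have h := p.adj_getVert_succ (i := 2 * t + 1) (by omega)
    rwa [Bip.getVert_two_mul_add_one p (by omega), show 2 * t + 1 + 1 = 2 * (t + 1) by ring,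
      Bip.getVert_two_mul p (by omega), Bip.adj_inr_inl] at h
  left_r := by
    rw [← Bip.length_eq_two_mul hp, Walk.getVert_length, mul_zero, Walk.getVert_zero]
  bijOn_left := Bip.bijOn_getVert_two_mul hp
  bijOn_right := Bip.bijOn_getVert_two_mul_add_one hp

lemma Gr.adj_of_inK {u v : Vtx r E} (s : Fin r) (hu : inK s u) (hv : inK s v) (hne : u ≠ v) :
    (Gr r E).Adj u v :=
  (SimpleGraph.fromRel_adj _ _ _).mpr ⟨hne, .inl (.inl ⟨s, hu, hv⟩)⟩

lemma Gr.adj_of_inK' {u v : Vtx r E} (j : Fin r) (hu : inK' j u) (hv : inK' j v) (hne : u ≠ v) :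
    (Gr r E).Adj u v :=
  (SimpleGraph.fromRel_adj _ _ _).mpr ⟨hne, .inl (.inr (.inl ⟨j, hu, hv⟩))⟩

lemma Gr.adj_of_inK'' {u v : Vtx r E} (j : Fin r) (h3 : {i : Fin r | E i j}.ncard = 3)
    (hu : inK'' j u) (hv : inK'' j v) (hne : u ≠ v) : (Gr r E).Adj u v :=
  (SimpleGraph.fromRel_adj _ _ _).mpr ⟨hne, .inl (.inr (.inr ⟨j, h3, hu, hv⟩))⟩

lemma Gr.adj_Xv_Av {i j : Fin r} (h : E i j) : (Gr r E).Adj (Xv i) (Av i j h) :=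
  Gr.adj_of_inK i rfl le_rfl fun h => nomatch congrArg Subtype.val h

lemma Gr.adj_Av_Yv {i j : Fin r} (h : E i j) : (Gr r E).Adj (Av i j h) (Yv j) :=
  Gr.adj_of_inK' j rfl rfl fun h => nomatch congrArg Subtype.val h

lemma Gr.adj_Av_Zv {i j : Fin r} (h : E i j) (h3 : {i : Fin r | E i j}.ncard = 3) :
    (Gr r E).Adj (Av i j h) (Zv j h3) :=
  Gr.adj_of_inK'' j h3 rfl rfl fun h => nomatch congrArg Subtype.val h

lemma Xv_injective : Function.Injective (Xv : Fin r → Vtx r E) := fun _ _ h =>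
  Sum.inl_injective (congrArg Subtype.val h)

def Vtx.gadget (v : Vtx r E) : Option (Fin r) :=
  match v.val with
  | .inl _ => none
  | .inr (.inl j) | .inr (.inr (.inl j)) | .inr (.inr (.inr (_, j))) => some j

@[simp] lemma Vtx.gadget_Xv (i : Fin r) : (Xv i : Vtx r E).gadget = none := rfl

variable {i j k : Fin r}

-- Total versions of `A_{ij}` and `Z_j`; the junk value `Y_j` keeps them in the gadget of `n_j`.
open Classical in
noncomputable def Av' (E : Fin r → Fin r → Prop) (i j : Fin r) : Vtx r E :=
  if h : E i j then Av i j h else Yv j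

open Classical in
noncomputable def Zv' (E : Fin r → Fin r → Prop) (j : Fin r) : Vtx r E :=
  if h : {i : Fin r | E i j}.ncard = 3 then Zv j h else Yv j

lemma Av'_eq (h : E i j) : Av' E i j = Av i j h := dif_pos h

lemma Zv'_eq (h3 : {i : Fin r | E i j}.ncard = 3) : Zv' E j = Zv j h3 := dif_pos h3

@[simp] lemma Vtx.gadget_Av' : (Av' E i j).gadget = some j := by
  unfold Av'; split <;> rfl

@[simp] lemma Vtx.gadget_Zv' : (Zv' E j).gadget = some j := by
  unfold Zv'; split <;> rfl

open Classical in
noncomputable def thirdNbr (E : Fin r → Fin r → Prop) (j i k : Fin r) : Fin r :=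
  if h : ∃ m, E m j ∧ m ≠ i ∧ m ≠ k then h.choose else i

lemma thirdNbr_spec (h3 : {x : Fin r | E x j}.ncard = 3) :
    E (thirdNbr E j i k) j ∧ thirdNbr E j i k ≠ i ∧ thirdNbr E j i k ≠ k := by
  have hlt : ({i, k} : Set (Fin r)).ncard < {x : Fin r | E x j}.ncard := by
    have := Set.ncard_insert_le i ({k} : Set (Fin r))
    rw [Set.ncard_singleton] at this
    omega
  obtain ⟨m, hm, hmik⟩ := Set.exists_mem_notMem_of_ncard_lt_ncard hlt
  have hex : ∃ m, E m j ∧ m ≠ i ∧ m ≠ k := ⟨m, hm, by simpa [not_or] using hmik⟩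
  rw [thirdNbr, dif_pos hex]
  exact hex.choose_spec

lemma eq_or_eq_of_ncard_eq_two (h2 : {x : Fin r | E x j}.ncard = 2) (hi : E i j) (hk : E k j)
    (hik : i ≠ k) {i' : Fin r} (hi' : E i' j) : i' = i ∨ i' = k := by
  have hN : ({i, k} : Set (Fin r)) = {x | E x j} :=
    Set.eq_of_subset_of_ncard_le (by simp [Set.insert_subset_iff, hi, hk])
      (by rw [h2, Set.ncard_pair hik])
  have : i' ∈ ({i, k} : Set (Fin r)) := hN ▸ hi'
  simpa using this

lemma eq_or_eq_or_eq_of_ncard_eq_three (h3 : {x : Fin r | E x j}.ncard = 3) (hi : E i j)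
    (hk : E k j) (hik : i ≠ k) {i' : Fin r} (hi' : E i' j) :
    i' = i ∨ i' = thirdNbr E j i k ∨ i' = k := by
  obtain ⟨hh, hhi, hhk⟩ := thirdNbr_spec (i := i) (k := k) h3
  have hN : ({i, thirdNbr E j i k, k} : Set (Fin r)) = {x | E x j} :=
    Set.eq_of_subset_of_ncard_le (by simp [Set.insert_subset_iff, hi, hk, hh])
      (by rw [h3, Set.ncard_insert_of_notMem (by simp [hik, hhi.symm]), Set.ncard_pair hhk])
  have : i' ∈ ({i, thirdNbr E j i k, k} : Set (Fin r)) := hN ▸ hi'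
  simpa using this

open Classical in
noncomputable def gadgetPath (E : Fin r → Fin r → Prop) (i j k : Fin r) : List (Vtx r E) :=
  if {x : Fin r | E x j}.ncard = 3 then
    [Xv i, Av' E i j, Yv j, Av' E (thirdNbr E j i k) j, Zv' E j, Av' E k j]
  else [Xv i, Av' E i j, Yv j, Av' E k j]

lemma gadgetPath_of_ncard_eq_three (h3 : {x : Fin r | E x j}.ncard = 3) (hi : E i j) (hk : E k j) :
    gadgetPath E i j k = [Xv i, Av i j hi, Yv j, Av (thirdNbr E j i k) j (thirdNbr_spec h3).1,
      Zv j h3, Av k j hk] := by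
  rw [gadgetPath, if_pos h3, Av'_eq hi, Av'_eq hk, Av'_eq (thirdNbr_spec h3).1, Zv'_eq h3]

lemma gadgetPath_of_ncard_ne_three (h : {x : Fin r | E x j}.ncard ≠ 3) (hi : E i j) (hk : E k j) :
    gadgetPath E i j k = [Xv i, Av i j hi, Yv j, Av k j hk] := by
  rw [gadgetPath, if_neg h, Av'_eq hi, Av'_eq hk]

lemma head?_gadgetPath : (gadgetPath E i j k).head? = some (Xv i) := by
  unfold gadgetPath; split <;> rfl

lemma four_le_length_gadgetPath : 4 ≤ (gadgetPath E i j k).length := by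
  unfold gadgetPath; split <;> simp

lemma isChain_gadgetPath_append (hi : E i j) (hk : E k j) :
    (gadgetPath E i j k ++ [Xv k]).IsChain (Gr r E).Adj := by
  by_cases h3 : {x : Fin r | E x j}.ncard = 3
  · have hh := (thirdNbr_spec (i := i) (k := k) h3).1
    simp only [gadgetPath_of_ncard_eq_three h3 hi hk, List.cons_append, List.nil_append,
      List.isChain_cons_cons, List.isChain_singleton, and_true]
    exact ⟨Gr.adj_Xv_Av hi, Gr.adj_Av_Yv hi, (Gr.adj_Av_Yv hh).symm, Gr.adj_Av_Zv hh h3,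
      (Gr.adj_Av_Zv hk h3).symm, (Gr.adj_Xv_Av hk).symm⟩
  · simp only [gadgetPath_of_ncard_ne_three h3 hi hk, List.cons_append, List.nil_append,
      List.isChain_cons_cons, List.isChain_singleton, and_true]
    exact ⟨Gr.adj_Xv_Av hi, Gr.adj_Av_Yv hi, (Gr.adj_Av_Yv hk).symm, (Gr.adj_Xv_Av hk).symm⟩

lemma nodup_gadgetPath (hi : E i j) (hk : E k j) (hik : i ≠ k) : (gadgetPath E i j k).Nodup := by
  by_cases h3 : {x : Fin r | E x j}.ncard = 3
  · obtain ⟨-, hhi, hhk⟩ := thirdNbr_spec (i := i) (k := k) h3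
    rw [gadgetPath_of_ncard_eq_three h3 hi hk]
    refine List.Nodup.of_map (fun v : Vtx r E => v.val) ?_
    simp only [List.map_cons, List.map_nil]
    simp [Xv, Yv, Zv, Av, hik, hhi.symm, hhk]
  · rw [gadgetPath_of_ncard_ne_three h3 hi hk]
    refine List.Nodup.of_map (fun v : Vtx r E => v.val) ?_
    simp only [List.map_cons, List.map_nil]
    simp [Xv, Yv, Av, hik]

lemma eq_Xv_or_gadget_eq_of_mem_gadgetPath {v : Vtx r E} (hv : v ∈ gadgetPath E i j k) :
    v = Xv i ∨ v.gadget = some j := by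
  unfold gadgetPath at hv
  split at hv <;> simp only [List.mem_cons, List.not_mem_nil, or_false] at hv <;>
    rcases hv with rfl | rfl | rfl | rfl | rfl | rfl <;>
    first | exact .inl rfl | exact .inr rfl | simp

lemma Yv_mem_gadgetPath : Yv j ∈ gadgetPath E i j k := by
  unfold gadgetPath; split <;> simp

lemma Zv_mem_gadgetPath (h3 : {x : Fin r | E x j}.ncard = 3) : Zv j h3 ∈ gadgetPath E i j k := by
  simp [gadgetPath, if_pos h3, Zv'_eq h3]

lemma Av_mem_gadgetPath (hdeg : {x : Fin r | E x j}.ncard = 2 ∨ {x : Fin r | E x j}.ncard = 3)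
    (hi : E i j) (hk : E k j) (hik : i ≠ k) {i' : Fin r} (hi' : E i' j) :
    Av i' j hi' ∈ gadgetPath E i j k := by
  by_cases h3 : {x : Fin r | E x j}.ncard = 3
  · rw [gadgetPath_of_ncard_eq_three h3 hi hk]
    rcases eq_or_eq_or_eq_of_ncard_eq_three h3 hi hk hik hi' with rfl | rfl | rfl <;> simp
  · rw [gadgetPath_of_ncard_ne_three h3 hi hk]
    rcases eq_or_eq_of_ncard_eq_two (hdeg.resolve_right h3) hi hk hik hi' with rfl | rfl <;> simp

namespace BipHamCycle

variable (c : BipHamCycle r E)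

noncomputable def tour : List (Vtx r E) :=
  (List.range r).flatMap fun t => gadgetPath E (c.left t) (c.right t) (c.left (t + 1))

lemma left_ne_left_succ (hr : 2 ≤ r) {t : ℕ} (ht : t < r) : c.left t ≠ c.left (t + 1) := by
  intro h
  obtain ht' | ht' : t + 1 < r ∨ t + 1 = r := by omega
  · have := c.bijOn_left.injOn ht ht' h
    omega
  · rw [ht', c.left_r] at h
    have := c.bijOn_left.injOn ht (show 0 < r by omega) h
    omega

lemma isChain_tour_append : (c.tour ++ [Xv (c.left 0)]).IsChain (Gr r E).Adj := by
  rw [← c.left_r]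
  exact List.isChain_flatMap_range_append (x := fun t => Xv (c.left t))
    (fun _ _ => head?_gadgetPath)
    fun t ht => isChain_gadgetPath_append (c.adj_left t ht) (c.adj_right t ht)

lemma tour_eq_gadgetPath_append (hr : 0 < r) :
    ∃ l, c.tour = gadgetPath E (c.left 0) (c.right 0) (c.left 1) ++ l := by
  obtain ⟨n, rfl⟩ := Nat.exists_eq_add_of_lt hr
  exact ⟨_, by rw [tour, List.range_succ_eq_map, List.flatMap_cons]⟩

lemma head?_tour (hr : 0 < r) : c.tour.head? = some (Xv (c.left 0)) := by
  obtain ⟨l, hl⟩ := c.tour_eq_gadgetPath_append hr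
  rw [hl, List.head?_append, head?_gadgetPath, Option.some_or]

lemma three_le_length_tour (hr : 0 < r) : 3 ≤ c.tour.length := by
  obtain ⟨l, hl⟩ := c.tour_eq_gadgetPath_append hr
  have := four_le_length_gadgetPath (E := E) (i := c.left 0) (j := c.right 0) (k := c.left 1)
  rw [hl, List.length_append]
  omega

lemma nodup_tour (hr : 2 ≤ r) : c.tour.Nodup := by
  refine List.nodup_flatMap.mpr ⟨fun t ht => ?_, List.nodup_range.pairwise_of_forall_ne ?_⟩
  · have ht : t < r := List.mem_range.mp ht
    exact nodup_gadgetPath (c.adj_left t ht) (c.adj_right t ht) (c.left_ne_left_succ hr ht)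
  · intro t ht t' ht' hne
    simp only [List.mem_range] at ht ht'
    refine List.disjoint_left.mpr fun v hv hv' => ?_
    rcases eq_Xv_or_gadget_eq_of_mem_gadgetPath hv with rfl | hg <;>
      rcases eq_Xv_or_gadget_eq_of_mem_gadgetPath hv' with h | hg'
    · exact hne (c.bijOn_left.injOn ht ht' (Xv_injective h))
    · simp at hg'
    · simp [h] at hg
    · exact hne (c.bijOn_right.injOn ht ht' (Option.some_injective _ (hg.symm.trans hg')))

lemma mem_tour (hr : 2 ≤ r)
    (hdeg : ∀ j : Fin r, {i : Fin r | E i j}.ncard = 2 ∨ {i : Fin r | E i j}.ncard = 3)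
    (v : Vtx r E) : v ∈ c.tour := by
  simp only [tour, List.mem_flatMap, List.mem_range]
  obtain ⟨i | j | j | ⟨i, j⟩, hv⟩ := v
  · obtain ⟨t, ht, rfl⟩ := c.bijOn_left.surjOn (Set.mem_univ i)
    exact ⟨t, ht, List.mem_of_mem_head? head?_gadgetPath⟩
  · obtain ⟨t, ht, rfl⟩ := c.bijOn_right.surjOn (Set.mem_univ j)
    exact ⟨t, ht, Yv_mem_gadgetPath⟩
  · obtain ⟨t, ht, rfl⟩ := c.bijOn_right.surjOn (Set.mem_univ j)
    exact ⟨t, ht, Zv_mem_gadgetPath hv⟩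
  · obtain ⟨t, ht, rfl⟩ := c.bijOn_right.surjOn (Set.mem_univ j)
    exact ⟨t, ht, Av_mem_gadgetPath (hdeg _) (c.adj_left t ht) (c.adj_right t ht)
      (c.left_ne_left_succ hr ht) hv⟩

end BipHamCycle

end Reduction

/-- If the bipartite graph `B` has a Hamiltonian cycle, then the graph `G`
constructed from `B` by the reduction has a Hamiltonian cycle. -/
theorem stmt_10 (r : ℕ) (hr : 2 ≤ r) (E : Fin r → Fin r → Prop)
    (hdeg : ∀ j : Fin r, {i : Fin r | E i j}.ncard = 2 ∨ {i : Fin r | E i j}.ncard = 3)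
    (hB : ∃ (a : Fin r ⊕ Fin r) (p : (Bip r E).Walk a a), p.IsHamiltonianCycle) :
    ∃ (b : Vtx r E) (q : (Gr r E).Walk b b), q.IsHamiltonianCycle := by
  obtain ⟨a, p, hp⟩ := hB
  let c := BipHamCycle.ofIsHamiltonianCycle (hp.rotate (hp.mem_support (.inl ⟨0, by omega⟩)))
  exact ⟨_, exists_isHamiltonianCycle_of_isChain (c.head?_tour (by omega)) c.isChain_tour_append
    (c.nodup_tour hr) (c.mem_tour hr hdeg) (c.three_le_length_tour (by omega))⟩
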